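/- Let ψ₁, ψ₂ satisfy ∂ψ₁ = pψ₂, ∂̄ψ₂ = −pψ₁ with p = |ψ₁|² + |ψ₂|², ψ₂ nowhere zero, and let w = ψ₁/ψ̄₂, A = 1 + |w|², J = ψ̄₁∂ψ₂ − ψ₂∂ψ̄₁. Then ∂w = A² ψ₂² and ∂̄w = −J̄ / ψ̄₂². -/

import Mathlib

open Complex ComplexConjugate

/-- The Wirtinger derivative `∂ = ∂/∂z`. -/
noncomputable def wdz (f : ℂ → ℂ) (z : ℂ) : ℂ :=
  (1 / 2 : ℂ) * (fderiv ℝ f z 1 - I * fderiv ℝ f z I)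

/-- The Wirtinger derivative `∂̄ = ∂/∂z̄`. -/
noncomputable def wdzbar (f : ℂ → ℂ) (z : ℂ) : ℂ :=
  (1 / 2 : ℂ) * (fderiv ℝ f z 1 + I * fderiv ℝ f z I)

lemma wdz_mul (f g : ℂ → ℂ) (z : ℂ) (hf : DifferentiableAt ℝ f z)
    (hg : DifferentiableAt ℝ g z) :
    wdz (fun u => f u * g u) z = wdz f z * g z + f z * wdz g z := by
  have h := hf.hasFDerivAt.mul hg.hasFDerivAt
  rw [wdz, HasFDerivAt.fderiv (f := fun u => f u * g u) h, wdz, wdz]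
  simp [ContinuousLinearMap.add_apply, ContinuousLinearMap.smul_apply, smul_eq_mul]
  ring

lemma wdzbar_mul (f g : ℂ → ℂ) (z : ℂ) (hf : DifferentiableAt ℝ f z)
    (hg : DifferentiableAt ℝ g z) :
    wdzbar (fun u => f u * g u) z = wdzbar f z * g z + f z * wdzbar g z := by
  have h := hf.hasFDerivAt.mul hg.hasFDerivAt
  rw [wdzbar, HasFDerivAt.fderiv (f := fun u => f u * g u) h, wdzbar, wdzbar]
  simp [ContinuousLinearMap.add_apply, ContinuousLinearMap.smul_apply, smul_eq_mul]
  ring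

lemma fderiv_conj_apply (f : ℂ → ℂ) (z v : ℂ) (hf : DifferentiableAt ℝ f z) :
    fderiv ℝ (fun u => conj (f u)) z v = conj (fderiv ℝ f z v) := by
  have h : HasFDerivAt (fun u => conj (f u))
      ((Complex.conjCLE.toContinuousLinearMap).comp (fderiv ℝ f z)) z :=
    (Complex.conjCLE.toContinuousLinearMap.hasFDerivAt).comp z hf.hasFDerivAt
  rw [h.fderiv]
  simp

lemma wdz_conj (f : ℂ → ℂ) (z : ℂ) (hf : DifferentiableAt ℝ f z) :
    wdz (fun u => conj (f u)) z = conj (wdzbar f z) := by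
  rw [wdz, wdzbar, fderiv_conj_apply f z 1 hf, fderiv_conj_apply f z I hf]
  simp [map_add, map_mul, map_ofNat]
  ring

lemma wdzbar_conj (f : ℂ → ℂ) (z : ℂ) (hf : DifferentiableAt ℝ f z) :
    wdzbar (fun u => conj (f u)) z = conj (wdz f z) := by
  rw [wdzbar, wdz, fderiv_conj_apply f z 1 hf, fderiv_conj_apply f z I hf]
  simp [map_add, map_mul, map_ofNat]

lemma wdz_inv (g : ℂ → ℂ) (z : ℂ) (hg : DifferentiableAt ℝ g z) (h0 : g z ≠ 0) :
    wdz (fun u => (g u)⁻¹) z = -wdz g z / g z ^ 2 := by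
  have h := ((hasDerivAt_inv h0).hasFDerivAt.restrictScalars ℝ).comp z hg.hasFDerivAt
  rw [wdz, show fderiv ℝ (fun u => (g u)⁻¹) z = fderiv ℝ (Inv.inv ∘ g) z from rfl,
    h.fderiv, wdz]
  simp [ContinuousLinearMap.comp_apply, ContinuousLinearMap.coe_restrictScalars',
    ContinuousLinearMap.smulRight_apply, smul_eq_mul]
  field_simp
  ring

lemma wdzbar_inv (g : ℂ → ℂ) (z : ℂ) (hg : DifferentiableAt ℝ g z) (h0 : g z ≠ 0) :
    wdzbar (fun u => (g u)⁻¹) z = -wdzbar g z / g z ^ 2 := by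
  have h := ((hasDerivAt_inv h0).hasFDerivAt.restrictScalars ℝ).comp z hg.hasFDerivAt
  rw [wdzbar, show fderiv ℝ (fun u => (g u)⁻¹) z = fderiv ℝ (Inv.inv ∘ g) z from rfl,
    h.fderiv, wdzbar]
  simp [ContinuousLinearMap.comp_apply, ContinuousLinearMap.coe_restrictScalars',
    ContinuousLinearMap.smulRight_apply, smul_eq_mul]
  field_simp
  ring


/-- For solutions of the generalised Weierstrass system with `ψ₂` nowhere zero,
and `w = ψ₁/ψ̄₂`, `A = 1 + |w|²`, `J = ψ̄₁∂ψ₂ - ψ₂∂ψ̄₁`, one has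
`∂w = A²ψ₂²` and `∂̄w = -J̄/ψ̄₂²`. -/
theorem gw_w_derivatives (s : Set ℂ) (hs : IsOpen s) (ψ₁ ψ₂ : ℂ → ℂ)
    (hψ₁ : ContDiffOn ℝ (⊤ : ℕ∞) ψ₁ s) (hψ₂ : ContDiffOn ℝ (⊤ : ℕ∞) ψ₂ s)
    (hψ₂ne : ∀ z ∈ s, ψ₂ z ≠ 0)
    (h1 : ∀ z ∈ s, wdz ψ₁ z = ((normSq (ψ₁ z) + normSq (ψ₂ z) : ℝ) : ℂ) * ψ₂ z)
    (h2 : ∀ z ∈ s, wdzbar ψ₂ z = -((normSq (ψ₁ z) + normSq (ψ₂ z) : ℝ) : ℂ) * ψ₁ z)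
    (w A J : ℂ → ℂ)
    (hw : ∀ z, w z = ψ₁ z / conj (ψ₂ z))
    (hA : ∀ z, A z = 1 + ((normSq (w z) : ℝ) : ℂ))
    (hJ : ∀ z, J z = conj (ψ₁ z) * wdz ψ₂ z - ψ₂ z * wdz (fun u => conj (ψ₁ u)) z) :
    ∀ z ∈ s, wdz w z = A z ^ 2 * ψ₂ z ^ 2 ∧
      wdzbar w z = -conj (J z) / conj (ψ₂ z) ^ 2 := by
  intro z hz
  have hd1 : DifferentiableAt ℝ ψ₁ z :=
    (hψ₁.contDiffAt (hs.mem_nhds hz)).differentiableAt (by simp)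
  have hd2 : DifferentiableAt ℝ ψ₂ z :=
    (hψ₂.contDiffAt (hs.mem_nhds hz)).differentiableAt (by simp)
  have hb : ψ₂ z ≠ 0 := hψ₂ne z hz
  have hbc : conj (ψ₂ z) ≠ 0 := by simpa using hb
  have hc2 : DifferentiableAt ℝ (fun u => conj (ψ₂ u)) z :=
    (Complex.conjCLE.differentiableAt).comp z hd2
  have hinv : DifferentiableAt ℝ (fun u => (conj (ψ₂ u))⁻¹) z := by
    have h := ((hasDerivAt_inv hbc).hasFDerivAt.restrictScalars ℝ).comp z hc2.hasFDerivAt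
    exact h.differentiableAt
  have hwfun : w = fun u => ψ₁ u * (conj (ψ₂ u))⁻¹ :=
    funext fun u => by rw [hw u, div_eq_mul_inv]
  have e3 : wdz (fun u => conj (ψ₂ u)) z = conj (wdzbar ψ₂ z) := wdz_conj ψ₂ z hd2
  have e3' : wdzbar (fun u => conj (ψ₂ u)) z = conj (wdz ψ₂ z) := wdzbar_conj ψ₂ z hd2
  have e2 : wdz (fun u => (conj (ψ₂ u))⁻¹) z
      = -conj (wdzbar ψ₂ z) / conj (ψ₂ z) ^ 2 := by
    rw [wdz_inv _ z hc2 hbc, e3]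
  have e2' : wdzbar (fun u => (conj (ψ₂ u))⁻¹) z
      = -conj (wdz ψ₂ z) / conj (ψ₂ z) ^ 2 := by
    rw [wdzbar_inv _ z hc2 hbc, e3']
  have e1 : wdz w z = wdz ψ₁ z * (conj (ψ₂ z))⁻¹
      + ψ₁ z * (-conj (wdzbar ψ₂ z) / conj (ψ₂ z) ^ 2) := by
    rw [hwfun, wdz_mul ψ₁ _ z hd1 hinv, e2]
  have e1' : wdzbar w z = wdzbar ψ₁ z * (conj (ψ₂ z))⁻¹
      + ψ₁ z * (-conj (wdz ψ₂ z) / conj (ψ₂ z) ^ 2) := by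
    rw [hwfun, wdzbar_mul ψ₁ _ z hd1 hinv, e2']
  constructor
  · rw [e1, h1 z hz, h2 z hz, hA, hw]
    have hns1 : ((normSq (ψ₁ z) : ℝ) : ℂ) = ψ₁ z * conj (ψ₁ z) := (mul_conj _).symm
    have hns2 : ((normSq (ψ₂ z) : ℝ) : ℂ) = ψ₂ z * conj (ψ₂ z) := (mul_conj _).symm
    have hnw : ((normSq (ψ₁ z / conj (ψ₂ z)) : ℝ) : ℂ)
        = (ψ₁ z * conj (ψ₁ z)) / (ψ₂ z * conj (ψ₂ z)) := by
      rw [normSq_div, normSq_conj]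
      push_cast
      rw [hns1, hns2]
    simp only [map_neg, map_mul, conj_conj, map_add, conj_ofReal]
    rw [hnw]
    push_cast
    rw [hns1, hns2]
    field_simp
    ring
  · rw [e1', hJ]
    have e4 : wdz (fun u => conj (ψ₁ u)) z = conj (wdzbar ψ₁ z) := wdz_conj ψ₁ z hd1
    rw [e4]
    simp only [map_sub, map_mul, conj_conj]
    field_simp
    ring
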